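/- arXiv:2101.00251 — 3 statements merged into one kernel-verified Lean document; each statement's English description precedes it below -/
import Mathlib

section
/- Let u : ℝ × [0,∞) → ℝ be of class C⁴ with u_xx(x,t) ≠ 0 at every point, and suppose u satisfies u_t(x,t)·u_xx(x,t) = (1/2)·u_x(x,t)² at every point. Then the local risk tolerance r(x,t) := −u_x(x,t)/u_xx(x,t) solves the fast diffusion equation r_t(x,t) + (1/2)·r(x,t)²·r_xx(x,t) = 0 at every point, with initial datum r(x,0) = −u_x(x,0)/u_xx(x,0). -/
/-!
Where `u_xx ≠ 0` the equation `u_t u_xx = u_x² / 2` says `u_t = -r u_x / 2`, and `r u_xx = -u_x`.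
Differentiating in `x` gives `u_xt = u_x (1 - r_x) / 2`, and once more
`u_xxt = (u_xx (1 - r_x) - u_x r_xx) / 2`. By symmetry of the mixed partials,
`r_t = (u_x u_xxt - u_xt u_xx) / u_xx²`, in which the `u_xx (1 - r_x)` terms cancel, leaving
`r_t = -(u_x / u_xx)² r_xx / 2 = -r² r_xx / 2`.
-/

/-- Partial derivative in the first (wealth) argument. -/
noncomputable def pderivX (u : ℝ → ℝ → ℝ) (x t : ℝ) : ℝ := deriv (fun x' => u x' t) x

/-- Partial derivative in the second (time) argument. -/
noncomputable def pderivT (u : ℝ → ℝ → ℝ) (x t : ℝ) : ℝ := deriv (fun t' => u x t') t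

/-- The local risk tolerance `r = -u_x / u_xx` of a utility `u`. -/
noncomputable def riskTol (u : ℝ → ℝ → ℝ) (x t : ℝ) : ℝ :=
  -(pderivX u x t) / pderivX (pderivX u) x t

open Function

section PartialDerivatives

variable {f : ℝ → ℝ → ℝ} {m n : WithTop ℕ∞}

theorem ContDiff.curry_left (hf : ContDiff ℝ n (uncurry f)) (t : ℝ) :
    ContDiff ℝ n (fun x => f x t) :=
  hf.comp (contDiff_id.prodMk contDiff_const)

theorem ContDiff.curry_right (hf : ContDiff ℝ n (uncurry f)) (x : ℝ) :
    ContDiff ℝ n (f x) :=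
  hf.comp (contDiff_const.prodMk contDiff_id)

theorem pderivX_eq_fderiv {x t : ℝ} (hf : DifferentiableAt ℝ (uncurry f) (x, t)) :
    pderivX f x t = fderiv ℝ (uncurry f) (x, t) (1, 0) := by
  have h := hf.hasFDerivAt.comp_hasDerivAt x ((hasDerivAt_id x).prodMk (hasDerivAt_const x t))
  exact h.deriv

theorem pderivT_eq_fderiv {x t : ℝ} (hf : DifferentiableAt ℝ (uncurry f) (x, t)) :
    pderivT f x t = fderiv ℝ (uncurry f) (x, t) (0, 1) := by
  have h := hf.hasFDerivAt.comp_hasDerivAt t ((hasDerivAt_const t x).prodMk (hasDerivAt_id t))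
  exact h.deriv

theorem uncurry_pderivX_eq_fderiv (hf : Differentiable ℝ (uncurry f)) :
    uncurry (pderivX f) = fun p => fderiv ℝ (uncurry f) p (1, 0) :=
  funext fun p => pderivX_eq_fderiv (hf p)

theorem uncurry_pderivT_eq_fderiv (hf : Differentiable ℝ (uncurry f)) :
    uncurry (pderivT f) = fun p => fderiv ℝ (uncurry f) p (0, 1) :=
  funext fun p => pderivT_eq_fderiv (hf p)

theorem ContDiff.uncurry_pderivX (hf : ContDiff ℝ m (uncurry f))
    (hmn : n + 1 ≤ m) : ContDiff ℝ n (uncurry (pderivX f)) := by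
  rw [uncurry_pderivX_eq_fderiv ((hf.of_le (le_add_self.trans hmn)).differentiable one_ne_zero)]
  exact (hf.fderiv_right hmn).clm_apply contDiff_const

theorem ContDiff.uncurry_pderivT (hf : ContDiff ℝ m (uncurry f))
    (hmn : n + 1 ≤ m) : ContDiff ℝ n (uncurry (pderivT f)) := by
  rw [uncurry_pderivT_eq_fderiv ((hf.of_le (le_add_self.trans hmn)).differentiable one_ne_zero)]
  exact (hf.fderiv_right hmn).clm_apply contDiff_const

theorem pderivT_pderivX_comm (hf : ContDiff ℝ 2 (uncurry f)) :
    pderivT (pderivX f) = pderivX (pderivT f) := by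
  ext x t
  have hd : Differentiable ℝ (uncurry f) := hf.differentiable (by norm_num)
  have hd2 : Differentiable ℝ (fderiv ℝ (uncurry f)) :=
    (hf.fderiv_right (m := 1) (by norm_num)).differentiable one_ne_zero
  rw [pderivT_eq_fderiv ((hf.uncurry_pderivX (n := 1) (by norm_num)).differentiable one_ne_zero _),
    pderivX_eq_fderiv ((hf.uncurry_pderivT (n := 1) (by norm_num)).differentiable one_ne_zero _),
    uncurry_pderivX_eq_fderiv hd, uncurry_pderivT_eq_fderiv hd,
    fderiv_clm_apply (hd2 _) (differentiableAt_const _),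
    fderiv_clm_apply (hd2 _) (differentiableAt_const _)]
  simpa using hf.contDiffAt.isSymmSndFDerivAt (by simp) (0, 1) (1, 0)

end PartialDerivatives

section RiskTolerance

variable {u : ℝ → ℝ → ℝ} {x t : ℝ}

theorem riskTol_mul_pderivX_pderivX (hb : pderivX (pderivX u) x t ≠ 0) :
    riskTol u x t * pderivX (pderivX u) x t = -pderivX u x t :=
  div_mul_cancel₀ _ hb

theorem pderivT_eq_of_pde (hb : pderivX (pderivX u) x t ≠ 0)
    (hpde : pderivT u x t * pderivX (pderivX u) x t = 1 / 2 * pderivX u x t ^ 2) :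
    pderivT u x t = -(1 / 2) * riskTol u x t * pderivX u x t := by
  apply mul_right_cancel₀ hb
  linear_combination hpde + 1 / 2 * pderivX u x t * riskTol_mul_pderivX_pderivX hb

theorem ContDiff.riskTol_left {m n : WithTop ℕ∞} (hu : ContDiff ℝ m (uncurry u))
    (hmn : n + 2 ≤ m) (hb : ∀ x, pderivX (pderivX u) x t ≠ 0) :
    ContDiff ℝ n (fun x => riskTol u x t) := by
  have ha := hu.uncurry_pderivX (n := n + 1) (by rwa [add_assoc, one_add_one_eq_two])
  exact ((ha.of_le le_self_add).curry_left t).neg.div ((ha.uncurry_pderivX le_rfl).curry_left t) hb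

theorem pderivX_pderivT_of_pderivT_eq
    (hw : ∀ x, pderivT u x t = -(1 / 2) * riskTol u x t * pderivX u x t)
    (hr : DifferentiableAt ℝ (fun x => riskTol u x t) x)
    (ha : DifferentiableAt ℝ (fun x => pderivX u x t) x) (hb : pderivX (pderivX u) x t ≠ 0) :
    pderivX (pderivT u) x t = 1 / 2 * pderivX u x t * (1 - pderivX (riskTol u) x t) := by
  have h : HasDerivAt (fun x => pderivT u x t)
      (-(1 / 2) * pderivX (riskTol u) x t * pderivX u x t
        + -(1 / 2) * riskTol u x t * pderivX (pderivX u) x t) x := by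
    rw [funext hw]
    exact (hr.hasDerivAt.const_mul _).mul ha.hasDerivAt
  exact h.deriv.trans (by linear_combination -(1 / 2) * riskTol_mul_pderivX_pderivX hb)

theorem pderivX_pderivX_pderivT_of_pderivX_pderivT_eq
    (hφ : ∀ x, pderivX (pderivT u) x t = 1 / 2 * pderivX u x t * (1 - pderivX (riskTol u) x t))
    (ha : DifferentiableAt ℝ (fun x => pderivX u x t) x)
    (hr : DifferentiableAt ℝ (fun x => pderivX (riskTol u) x t) x) :
    pderivX (pderivX (pderivT u)) x t = 1 / 2 * (pderivX (pderivX u) x t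
      * (1 - pderivX (riskTol u) x t) - pderivX u x t * pderivX (pderivX (riskTol u)) x t) := by
  have h : HasDerivAt (fun x => pderivX (pderivT u) x t)
      (1 / 2 * pderivX (pderivX u) x t * (1 - pderivX (riskTol u) x t)
        + 1 / 2 * pderivX u x t * (0 - pderivX (pderivX (riskTol u)) x t)) x := by
    rw [funext hφ]
    exact (ha.hasDerivAt.const_mul _).mul ((hasDerivAt_const _ _).sub hr.hasDerivAt)
  exact h.deriv.trans (by ring)

theorem pderivT_riskTol (hu : ContDiff ℝ 3 (uncurry u)) (hb : pderivX (pderivX u) x t ≠ 0) :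
    pderivT (riskTol u) x t = (pderivX u x t * pderivX (pderivX (pderivT u)) x t
      - pderivX (pderivT u) x t * pderivX (pderivX u) x t) / pderivX (pderivX u) x t ^ 2 := by
  have ha : ContDiff ℝ 2 (uncurry (pderivX u)) := hu.uncurry_pderivX (by norm_num)
  have hb' : ContDiff ℝ 1 (uncurry (pderivX (pderivX u))) := ha.uncurry_pderivX (by norm_num)
  have h : HasDerivAt (riskTol u x) ((-pderivT (pderivX u) x t * pderivX (pderivX u) x t
      - -pderivX u x t * pderivT (pderivX (pderivX u)) x t) / pderivX (pderivX u) x t ^ 2) t :=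
    (((ha.curry_right x).differentiable two_ne_zero t).hasDerivAt.neg).div
      ((hb'.curry_right x).differentiable one_ne_zero t).hasDerivAt hb
  refine h.deriv.trans ?_
  rw [pderivT_pderivX_comm ha, pderivT_pderivX_comm (hu.of_le (by norm_num))]
  ring

end RiskTolerance

/-- **Fast diffusion equation for the local risk tolerance.**
If `u` is `C⁴` with `u_xx ≠ 0` on `ℝ × [0,∞)` and satisfies `u_t · u_xx = (1/2) · u_x²`,
then the local risk tolerance `r = -u_x/u_xx` solves `r_t + (1/2) · r² · r_xx = 0`
with initial datum `r(x,0) = -u_x(x,0)/u_xx(x,0)`. -/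
theorem fast_diffusion_equation (u : ℝ → ℝ → ℝ)
    (hu : ContDiff ℝ 4 (fun p : ℝ × ℝ => u p.1 p.2))
    (hne : ∀ x t : ℝ, 0 ≤ t → pderivX (pderivX u) x t ≠ 0)
    (hpde : ∀ x t : ℝ, 0 ≤ t →
      pderivT u x t * pderivX (pderivX u) x t = (1/2) * (pderivX u x t)^2) :
    (∀ x t : ℝ, 0 ≤ t →
      pderivT (riskTol u) x t
        + (1/2) * (riskTol u x t)^2 * pderivX (pderivX (riskTol u)) x t = 0)
    ∧ (∀ x : ℝ, riskTol u x 0 = -(pderivX u x 0) / pderivX (pderivX u) x 0) := by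
  refine ⟨fun x t ht => ?_, fun x => rfl⟩
  have hb : ∀ x, pderivX (pderivX u) x t ≠ 0 := fun x => hne x t ht
  have hr : ContDiff ℝ 2 (fun x => riskTol u x t) := hu.riskTol_left (by norm_num) hb
  have ha : ContDiff ℝ 3 (fun x => pderivX u x t) :=
    (hu.uncurry_pderivX (by norm_num)).curry_left t
  have hφ : ∀ x, pderivX (pderivT u) x t
      = 1 / 2 * pderivX u x t * (1 - pderivX (riskTol u) x t) := fun x =>
    pderivX_pderivT_of_pderivT_eq (fun x => pderivT_eq_of_pde (hb x) (hpde x t ht))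
      (hr.differentiable two_ne_zero x) (ha.differentiable (by norm_num) x) (hb x)
  rw [pderivT_riskTol (hu.of_le (by norm_num)) (hb x),
    pderivX_pderivX_pderivT_of_pderivX_pderivT_eq hφ (ha.differentiable (by norm_num) x)
      (hr.differentiable_deriv_two x), hφ, div_add' _ _ _ (pow_ne_zero 2 (hb x)),
    div_eq_zero_iff]
  left
  -- the numerator is `r_xx ((r u_xx)² - u_x²) / 2`
  linear_combination (1 / 2 * pderivX (pderivX (riskTol u)) x t
    * (riskTol u x t * pderivX (pderivX u) x t - pderivX u x t))
    * riskTol_mul_pderivX_pderivX (hb x)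
end

section
/- Let α > 0 and β > 0 be constants. The function r(x,t) = √(α·x² + β·e^{−α·t}) defined on ℝ × [0,∞) solves the fast diffusion equation r_t(x,t) + (1/2)·r(x,t)²·r_xx(x,t) = 0 at every point, with initial datum r(x,0) = √(α·x² + β). -/
/-- The asymptotically linear local risk tolerance `r(x,t) = √(α·x² + β·e^{-α·t})`. -/
noncomputable def asympLinRiskTol (α β x t : ℝ) : ℝ :=
  Real.sqrt (α * x^2 + β * Real.exp (-α * t))

open Real

section SqrtQuadratic

variable {α c : ℝ}

theorem hasDerivAt_sqrt_mul_sq_add {x : ℝ} (hx : 0 < α * x ^ 2 + c) :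
    HasDerivAt (fun y => √(α * y ^ 2 + c)) (α * x / √(α * x ^ 2 + c)) x := by
  have hquad : HasDerivAt (fun y => α * y ^ 2 + c) (α * (2 * x)) x := by
    simpa using ((hasDerivAt_pow 2 x).const_mul α).add_const c
  convert hquad.sqrt hx.ne' using 1
  field_simp

theorem hasDerivAt_mul_div_sqrt_mul_sq_add {x : ℝ} (hx : 0 < α * x ^ 2 + c) :
    HasDerivAt (fun y => α * y / √(α * y ^ 2 + c)) (α * c / √(α * x ^ 2 + c) ^ 3) x := by
  have hs : 0 < √(α * x ^ 2 + c) := sqrt_pos.2 hx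
  have hs2 : √(α * x ^ 2 + c) ^ 2 = α * x ^ 2 + c := sq_sqrt hx.le
  refine (((hasDerivAt_id' x).const_mul α).fun_div (hasDerivAt_sqrt_mul_sq_add hx)
    hs.ne').congr_deriv ?_
  field_simp
  linear_combination α * hs2

theorem deriv_deriv_sqrt_mul_sq_add (hpos : ∀ y, 0 < α * y ^ 2 + c) (x : ℝ) :
    deriv (deriv fun y => √(α * y ^ 2 + c)) x = α * c / √(α * x ^ 2 + c) ^ 3 := by
  have hderiv : deriv (fun y => √(α * y ^ 2 + c)) = fun y => α * y / √(α * y ^ 2 + c) :=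
    funext fun y => (hasDerivAt_sqrt_mul_sq_add (hpos y)).deriv
  rw [hderiv]
  exact (hasDerivAt_mul_div_sqrt_mul_sq_add (hpos x)).deriv

end SqrtQuadratic

theorem hasDerivAt_sqrt_add_mul_exp {a α β t : ℝ} (ht : 0 < a + β * exp (-α * t)) :
    HasDerivAt (fun τ => √(a + β * exp (-α * τ)))
      (-(α * (β * exp (-α * t))) / (2 * √(a + β * exp (-α * t)))) t := by
  have hlin : HasDerivAt (fun τ => -α * τ) (-α) t := by
    simpa using (hasDerivAt_id t).const_mul (-α)
  convert ((hlin.exp.const_mul β).const_add a).sqrt ht.ne' using 2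
  ring

namespace asympLinRiskTol

variable {α β : ℝ}

theorem radicand_pos (hα : 0 ≤ α) (hβ : 0 < β) (x t : ℝ) :
    0 < α * x ^ 2 + β * exp (-α * t) := by
  positivity

theorem pderivT_eq (hα : 0 ≤ α) (hβ : 0 < β) (x t : ℝ) :
    pderivT (asympLinRiskTol α β) x t
      = -(α * (β * exp (-α * t))) / (2 * asympLinRiskTol α β x t) :=
  (hasDerivAt_sqrt_add_mul_exp (radicand_pos hα hβ x t)).deriv

theorem pderivX_pderivX_eq (hα : 0 ≤ α) (hβ : 0 < β) (x t : ℝ) :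
    pderivX (pderivX (asympLinRiskTol α β)) x t
      = α * (β * exp (-α * t)) / asympLinRiskTol α β x t ^ 3 :=
  deriv_deriv_sqrt_mul_sq_add (fun y => radicand_pos hα hβ y t) x

end asympLinRiskTol

/-- **Asymptotically linear risk tolerances solve the fast diffusion equation.**
For `α, β > 0`, the function `r(x,t) = √(α·x² + β·e^{-α·t})` solves
`r_t + (1/2) · r² · r_xx = 0` on `ℝ × [0,∞)`, with `r(x,0) = √(α·x² + β)`. -/
theorem asympLin_solves_fast_diffusion (α β : ℝ) (hα : 0 < α) (hβ : 0 < β) :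
    (∀ x t : ℝ, 0 ≤ t →
      pderivT (asympLinRiskTol α β) x t
        + (1/2) * (asympLinRiskTol α β x t)^2
          * pderivX (pderivX (asympLinRiskTol α β)) x t = 0)
    ∧ (∀ x : ℝ, asympLinRiskTol α β x 0 = Real.sqrt (α * x^2 + β)) := by
  refine ⟨fun x t _ => ?_, fun x => by simp [asympLinRiskTol]⟩
  have hr : 0 < asympLinRiskTol α β x t := sqrt_pos.2 (asympLinRiskTol.radicand_pos hα.le hβ x t)
  rw [asympLinRiskTol.pderivT_eq hα.le hβ, asympLinRiskTol.pderivX_pderivX_eq hα.le hβ]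
  field_simp
  ring
end

section
/- Let β > 0, M > 0 and N ∈ ℝ, and define on ℝ × [0,∞) the function u(x,t) = (M/2)·( log( x + √(x² + β·e^{−t}) ) − (e^{t}/β)·x·( x − √(x² + β·e^{−t}) ) − t/2 ) + N. Then u satisfies the partial differential equation u_t(x,t)·u_xx(x,t) = (1/2)·u_x(x,t)² at every point, and its local risk tolerance is −u_x(x,t)/u_xx(x,t) = √(x² + β·e^{−t}) for all (x,t) ∈ ℝ × [0,∞). -/
/-- The forward utility corresponding (for `α = 1`) to the asymptotically linear
local risk tolerance `r(x,t) = √(x² + β·e^{-t})`. -/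
noncomputable def forwardUtilityAlphaOne (β M N x t : ℝ) : ℝ :=
  M / 2 * (Real.log (x + Real.sqrt (x^2 + β * Real.exp (-t)))
      - (Real.exp t / β) * x * (x - Real.sqrt (x^2 + β * Real.exp (-t)))
      - t / 2)
    + N

/-!
With `c = β e^{-t}` and `r = √(x² + c)`, the utility is `u = M/2 · (g(c, x) - t/2) + N` for the
profile `g(c, x) = log (x + r) - x (x - r) / c`. Direct differentiation gives
`∂ₓg = 2 / (x + r)` and `∂_c g = 1 / (2 (x + r)²)`, hence `u_x = M / (x + r)`,
`u_xx = -M / (r (x + r))` and, as `ċ = -c = x² - r²`, `u_t = -M r / (2 (x + r))`.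
Both claims are then identities between rational functions of `x`, `r` and `M`.
-/

open Real

lemma add_sqrt_sq_add_pos {c : ℝ} (hc : 0 < c) (x : ℝ) : 0 < x + √(x ^ 2 + c) := by
  have h : |x| < √(x ^ 2 + c) := by
    rw [← sqrt_sq_eq_abs]
    exact sqrt_lt_sqrt (sq_nonneg x) (lt_add_of_pos_right _ hc)
  linarith [neg_abs_le x]

noncomputable def utilityProfile (c x : ℝ) : ℝ :=
  log (x + √(x ^ 2 + c)) - x * (x - √(x ^ 2 + c)) / c

lemma forwardUtilityAlphaOne_eq_utilityProfile (β M N x t : ℝ) :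
    forwardUtilityAlphaOne β M N x t = M / 2 * (utilityProfile (β * exp (-t)) x - t / 2) + N := by
  simp only [forwardUtilityAlphaOne, utilityProfile, exp_neg, div_eq_mul_inv, mul_inv, inv_inv]
  ring

section

variable {c : ℝ}

lemma hasDerivAt_sqrt_sq_add (hc : 0 < c) (x : ℝ) :
    HasDerivAt (fun y => √(y ^ 2 + c)) (x / √(x ^ 2 + c)) x := by
  convert ((hasDerivAt_pow 2 x).add_const c).sqrt (by positivity) using 1
  field_simp
  ring

lemma hasDerivAt_inv_add_sqrt_sq_add (hc : 0 < c) (x : ℝ) :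
    HasDerivAt (fun y => (y + √(y ^ 2 + c))⁻¹)
      (-(√(x ^ 2 + c) * (x + √(x ^ 2 + c)))⁻¹) x := by
  have hw := add_sqrt_sq_add_pos hc x
  refine (((hasDerivAt_id' x).add (hasDerivAt_sqrt_sq_add hc x)).inv hw.ne').congr_deriv ?_
  simp only [Pi.add_apply]
  field_simp
  ring

lemma hasDerivAt_utilityProfile (hc : 0 < c) (x : ℝ) :
    HasDerivAt (utilityProfile c) (2 / (x + √(x ^ 2 + c))) x := by
  have hw := add_sqrt_sq_add_pos hc x
  have hr2 : √(x ^ 2 + c) ^ 2 = x ^ 2 + c := sq_sqrt (by positivity)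
  have hs := hasDerivAt_sqrt_sq_add hc x
  refine ((((hasDerivAt_id' x).add hs).log hw.ne').sub
    (((hasDerivAt_id' x).mul ((hasDerivAt_id' x).sub hs)).div_const c)).congr_deriv ?_
  simp only [Pi.add_apply, Pi.sub_apply]
  field_simp
  -- eliminating `c = r² - x²` leaves a polynomial identity in `x` and `r`
  generalize √(x ^ 2 + c) = r at hr2 ⊢
  obtain rfl : c = r ^ 2 - x ^ 2 := by linarith
  ring

lemma hasDerivAt_utilityProfile_param (hc : 0 < c) (x : ℝ) :
    HasDerivAt (fun c => utilityProfile c x) (1 / (2 * (x + √(x ^ 2 + c)) ^ 2)) c := by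
  have hw := add_sqrt_sq_add_pos hc x
  have hr2 : √(x ^ 2 + c) ^ 2 = x ^ 2 + c := sq_sqrt (by positivity)
  have hs : HasDerivAt (fun c => √(x ^ 2 + c)) (1 / (2 * √(x ^ 2 + c))) c :=
    ((hasDerivAt_id' c).const_add (x ^ 2)).sqrt (by positivity)
  refine (((hs.const_add x).log hw.ne').sub
    (((hs.const_sub x).const_mul x).div (hasDerivAt_id' c) hc.ne')).congr_deriv ?_
  field_simp
  generalize √(x ^ 2 + c) = r at hr2 ⊢
  obtain rfl : c = r ^ 2 - x ^ 2 := by linarith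
  ring

end

section

variable {β : ℝ} (M N : ℝ)

lemma pderivX_forwardUtilityAlphaOne (hβ : 0 < β) :
    pderivX (forwardUtilityAlphaOne β M N)
      = fun x t => M * (x + √(x ^ 2 + β * exp (-t)))⁻¹ := by
  funext x t
  have hc : 0 < β * exp (-t) := by positivity
  refine HasDerivAt.deriv ?_
  simp_rw [forwardUtilityAlphaOne_eq_utilityProfile]
  refine ((((hasDerivAt_utilityProfile hc x).sub_const (t / 2)).const_mul (M / 2)).add_const
    N).congr_deriv ?_
  ring

lemma pderivX_pderivX_forwardUtilityAlphaOne (hβ : 0 < β) (x t : ℝ) :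
    pderivX (pderivX (forwardUtilityAlphaOne β M N)) x t
      = -(M * (√(x ^ 2 + β * exp (-t)) * (x + √(x ^ 2 + β * exp (-t))))⁻¹) := by
  rw [pderivX_forwardUtilityAlphaOne M N hβ, ← mul_neg]
  exact ((hasDerivAt_inv_add_sqrt_sq_add (by positivity) x).const_mul M).deriv

lemma pderivT_forwardUtilityAlphaOne (hβ : 0 < β) (x t : ℝ) :
    pderivT (forwardUtilityAlphaOne β M N) x t
      = -(M * √(x ^ 2 + β * exp (-t)) / (2 * (x + √(x ^ 2 + β * exp (-t))))) := by
  have hc : 0 < β * exp (-t) := by positivity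
  have hw := add_sqrt_sq_add_pos hc x
  have hr2 : √(x ^ 2 + β * exp (-t)) ^ 2 = x ^ 2 + β * exp (-t) := sq_sqrt (by positivity)
  have hc' : HasDerivAt (fun s => β * exp (-s)) (-(β * exp (-t))) t := by
    simpa using ((hasDerivAt_neg t).exp).const_mul β
  refine HasDerivAt.deriv ?_
  simp_rw [forwardUtilityAlphaOne_eq_utilityProfile]
  refine (((((hasDerivAt_utilityProfile_param hc x).comp t hc').sub
    ((hasDerivAt_id' t).div_const 2)).const_mul (M / 2)).add_const N).congr_deriv ?_
  field_simp
  generalize β * exp (-t) = c at hr2 hw ⊢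
  generalize √(x ^ 2 + c) = r at hr2 hw ⊢
  obtain rfl : c = r ^ 2 - x ^ 2 := by linarith
  ring

end

/-- **Forward utility for `α = 1`.** For `β > 0`, `M > 0`, `N ∈ ℝ`, the function
`u(x,t) = (M/2)·(log(x + √(x² + β·e^{−t})) − (e^t/β)·x·(x − √(x² + β·e^{−t})) − t/2) + N`
satisfies `u_t · u_xx = (1/2) · u_x²` on `ℝ × [0,∞)`, and its local risk tolerance is
`-u_x/u_xx = √(x² + β·e^{−t})`. -/
theorem forwardUtilityAlphaOne_forward (β M N : ℝ) (hβ : 0 < β) (hM : 0 < M) :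
    ∀ x t : ℝ, 0 ≤ t →
      (pderivT (forwardUtilityAlphaOne β M N) x t
          * pderivX (pderivX (forwardUtilityAlphaOne β M N)) x t
        = (1/2) * (pderivX (forwardUtilityAlphaOne β M N) x t)^2)
      ∧ (-(pderivX (forwardUtilityAlphaOne β M N) x t)
            / pderivX (pderivX (forwardUtilityAlphaOne β M N)) x t
          = Real.sqrt (x^2 + β * Real.exp (-t))) := by
  intro x t _
  have hc : 0 < β * exp (-t) := by positivity
  have hw := add_sqrt_sq_add_pos hc x
  rw [pderivT_forwardUtilityAlphaOne M N hβ, pderivX_pderivX_forwardUtilityAlphaOne M N hβ,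
    pderivX_forwardUtilityAlphaOne M N hβ]
  constructor <;> field_simp
end
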